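/- arXiv:2403.13520 — 6 statements merged into one kernel-verified Lean document; each statement's English description precedes it below -/
import Mathlib

section
/- Let R be a ring and A a left R-module. The map ε sending a natural transformation α : (A,-)-underline ⟶ Hom(R,-) to the element f_α(1) ∈ A, where f_α : R → A is the R-linear map corresponding under the Yoneda lemma to the composite α ∘ π : Hom(A,-) ⟶ Hom(R,-), is a well-defined isomorphism of abelian groups from Nat((A,-)-underline, Hom(R,-)) onto the Bass torsion t(A), and this isomorphism is natural in A. -/
open CategoryTheory Opposite
universe u
variable {R : Type u} [Ring R]

theorem projective_prod {M N : Type u} [AddCommGroup M] [AddCommGroup N] [Module R M]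
    [Module R N] (hM : Module.Projective R M) (hN : Module.Projective R N) :
    Module.Projective R (M × N) := by
  rw [Module.projective_def] at hM hN
  obtain ⟨sM, hsM⟩ := hM
  obtain ⟨sN, hsN⟩ := hN
  exact Module.Projective.of_split (M := (M →₀ R) × (N →₀ R))
    (LinearMap.prodMap sM sN)
    (LinearMap.prodMap (Finsupp.linearCombination R id) (Finsupp.linearCombination R id))
    (by ext x <;> simp [hsM _, hsN _])

/-- Bass torsion. -/
def bassTorsion (R : Type u) [Ring R] (M : Type u) [AddCommGroup M] [Module R M] :
    Submodule R M where
  carrier := {a | ∀ h : M →ₗ[R] R, h a = 0}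
  zero_mem' := by intro h; simp
  add_mem' := by intro a b ha hb h; simp [map_add, ha h, hb h]
  smul_mem' := by intro r a ha h; rw [map_smul]; simp [ha h]

/-- A homomorphism factors through a projective module. -/
def FactorsThroughProjective {A M : ModuleCat.{u} R} (g : A ⟶ M) : Prop :=
  ∃ (P : ModuleCat.{u} R) (p : A ⟶ P) (q : P ⟶ M), Module.Projective R P ∧ p ≫ q = g

/-- The subgroup of maps factoring through a projective. -/
def projSub (A M : ModuleCat.{u} R) : AddSubgroup (A ⟶ M) where
  carrier := {g | FactorsThroughProjective g}
  zero_mem' := ⟨ModuleCat.of R PUnit, 0, 0, inferInstance, by simp⟩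
  add_mem' := by
    rintro g₁ g₂ ⟨P₁, p₁, q₁, hP₁, h₁⟩ ⟨P₂, p₂, q₂, hP₂, h₂⟩
    refine ⟨ModuleCat.of R (P₁ × P₂), ModuleCat.ofHom (LinearMap.prod p₁.hom p₂.hom),
      ModuleCat.ofHom (q₁.hom ∘ₗ LinearMap.fst R P₁ P₂ + q₂.hom ∘ₗ LinearMap.snd R P₁ P₂),
      projective_prod hP₁ hP₂, ?_⟩
    subst h₁ h₂
    ext a
    rfl
  neg_mem' := by
    rintro g ⟨P, p, q, hP, h⟩
    exact ⟨P, p, -q, hP, by rw [← h]; simp⟩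

def postcompHom {A M N : ModuleCat.{u} R} (f : M ⟶ N) :
    (A ⟶ M) →+ (A ⟶ N) :=
  AddMonoidHom.mk' (fun g => g ≫ f) (fun g₁ g₂ => by simp [Preadditive.add_comp])

/-- The stable Hom functor Hom(A,-) modulo projectives. -/
def stableHomFunctor (A : ModuleCat.{u} R) : ModuleCat.{u} R ⥤ AddCommGrpCat.{u} where
  obj M := AddCommGrpCat.of ((A ⟶ M) ⧸ projSub A M)
  map {M N} f := AddCommGrpCat.ofHom (QuotientAddGroup.map _ _ (postcompHom f)
    (by rintro g ⟨P, p, q, hP, h⟩; exact ⟨P, p, q ≫ f, hP, by rw [← h]; simp [postcompHom]⟩))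
  map_id M := by
    ext x
    simp [postcompHom]
  map_comp {M N K} f g := by
    ext x
    simp [postcompHom]

/-- The forgetful functor `Hom(R,-)`. -/
def forgetfulFunctor (R : Type u) [Ring R] : ModuleCat.{u} R ⥤ AddCommGrpCat.{u} :=
  preadditiveCoyoneda.obj (op (ModuleCat.of R R))

/-- An element of the value of the forgetful functor, viewed as a linear map `R → A`. -/
def toHom {A : ModuleCat.{u} R} (x : (forgetfulFunctor R).obj A) :
    ModuleCat.of R R ⟶ A := x

def precompHom {A B M : ModuleCat.{u} R} (f : A ⟶ B) :
    (B ⟶ M) →+ (A ⟶ M) :=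
  AddMonoidHom.mk' (fun g => f ≫ g) (fun g₁ g₂ => by simp [Preadditive.comp_add])

/-- Covariant functoriality (in the contravariant variable) of the stable Hom functor. -/
def stableHomPrecomp {A B : ModuleCat.{u} R} (f : A ⟶ B) :
    stableHomFunctor B ⟶ stableHomFunctor A where
  app M := AddCommGrpCat.ofHom (QuotientAddGroup.map _ _ (precompHom f)
    (by rintro g ⟨P, p, q, hP, h⟩
        exact ⟨P, f ≫ p, q, hP, by rw [← h]; simp [precompHom, Category.assoc]⟩))
  naturality {M N} u := by
    ext x
    induction x using QuotientAddGroup.induction_on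
    first
      | simp [stableHomFunctor, postcompHom, precompHom, Category.assoc]; done
      | rfl


/-!
A natural transformation `α : (A,-)-underline ⟶ Hom(R,-)` is, by Yoneda, determined by the
element `a = ε α`: it sends the class of `g : A ⟶ M` to `r ↦ r • g a`. Such a formula is well
defined on stable classes exactly when every map out of `A` factoring through a projective kills
`a`. Maps `A → R` factor through the projective `R`, so `a ∈ t(A)`; conversely, projective
modules embed in free ones and so have zero Bass torsion, and linear maps preserve Bass torsion,
so every `a ∈ t(A)` is killed by maps through projectives.
-/

namespace bassTorsion

lemma map_mem {M N : Type u} [AddCommGroup M] [Module R M] [AddCommGroup N] [Module R N]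
    (f : M →ₗ[R] N) {a : M} (ha : a ∈ bassTorsion R M) : f a ∈ bassTorsion R N :=
  fun h => ha (h ∘ₗ f)

lemma eq_bot_of_projective {P : Type u} [AddCommGroup P] [Module R P] [Module.Projective R P] :
    bassTorsion R P = ⊥ := by
  obtain ⟨s, hs⟩ := Module.projective_def.mp ‹Module.Projective R P›
  refine (Submodule.eq_bot_iff _).mpr fun x hx => ?_
  have hsx : s x = 0 := Finsupp.ext fun i => hx (Finsupp.lapply i ∘ₗ s)
  rw [← hs x, hsx, map_zero]

end bassTorsion

lemma apply_eq_zero_of_mem_projSub {A M : ModuleCat.{u} R} {g : A ⟶ M}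
    (hg : g ∈ projSub A M) {a : A} (ha : a ∈ bassTorsion R A) : g a = 0 := by
  obtain ⟨P, p, q, hP, rfl⟩ := hg
  have hpa : p a ∈ bassTorsion R P := bassTorsion.map_mem p.hom ha
  rw [bassTorsion.eq_bot_of_projective, Submodule.mem_bot] at hpa
  simp [hpa]

namespace stableHomFunctor

variable {A : ModuleCat.{u} R}

lemma map_mk {M N : ModuleCat.{u} R} (f : M ⟶ N) (g : A ⟶ M) :
    (stableHomFunctor A).map f (QuotientAddGroup.mk g) = QuotientAddGroup.mk (g ≫ f) :=
  rfl

/-- The paper's `ε`. -/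
def eps (α : stableHomFunctor A ⟶ forgetfulFunctor R) : A :=
  toHom (α.app A (QuotientAddGroup.mk (𝟙 A))) 1

lemma app_mk (α : stableHomFunctor A ⟶ forgetfulFunctor R) {M : ModuleCat.{u} R} (g : A ⟶ M) :
    α.app M (QuotientAddGroup.mk g) =
      ModuleCat.ofHom (LinearMap.toSpanSingleton R M (g (eps α))) := by
  have hnat : α.app M ((stableHomFunctor A).map g (QuotientAddGroup.mk (𝟙 A))) =
      (forgetfulFunctor R).map g (α.app A (QuotientAddGroup.mk (𝟙 A))) :=
    NatTrans.naturality_apply α g _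
  rw [map_mk, Category.id_comp] at hnat
  rw [hnat]
  exact ModuleCat.hom_ext (LinearMap.ext_ring (LinearMap.toSpanSingleton_apply_one R M _).symm)

lemma eps_mem (α : stableHomFunctor A ⟶ forgetfulFunctor R) : eps α ∈ bassTorsion R A := by
  intro h
  have hproj : ModuleCat.ofHom h ∈ projSub A (ModuleCat.of R R) :=
    ⟨ModuleCat.of R R, ModuleCat.ofHom h, 𝟙 _, inferInstanceAs (Module.Projective R R),
      Category.comp_id _⟩
  have happ : α.app (ModuleCat.of R R) (QuotientAddGroup.mk (ModuleCat.ofHom h)) = 0 := by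
    rw [show (QuotientAddGroup.mk (ModuleCat.ofHom h) : (stableHomFunctor A).obj _) = 0 from
      (QuotientAddGroup.eq_zero_iff _).mpr hproj]
    exact map_zero _
  rw [app_mk] at happ
  exact (LinearMap.toSpanSingleton_eq_zero_iff R R).mp (congrArg ModuleCat.Hom.hom happ)

def evalToSpanSingleton (a : A) (M : ModuleCat.{u} R) : (A ⟶ M) →+ (ModuleCat.of R R ⟶ M) :=
  AddMonoidHom.mk' (fun g => ModuleCat.ofHom (LinearMap.toSpanSingleton R M (g a)))
    fun g₁ g₂ => by simp only [ModuleCat.hom_add, LinearMap.add_apply,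
      LinearMap.toSpanSingleton_add, ModuleCat.ofHom_add]

lemma evalToSpanSingleton_apply (a : A) {M : ModuleCat.{u} R} (g : A ⟶ M) :
    evalToSpanSingleton a M g = ModuleCat.ofHom (LinearMap.toSpanSingleton R M (g a)) :=
  rfl

def ofBassTorsion (a : bassTorsion R A) : stableHomFunctor A ⟶ forgetfulFunctor R where
  app M := AddCommGrpCat.ofHom <| QuotientAddGroup.lift _ (evalToSpanSingleton a M)
    fun g hg => by
      change evalToSpanSingleton a M g = 0
      rw [evalToSpanSingleton_apply, apply_eq_zero_of_mem_projSub hg a.2,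
        LinearMap.toSpanSingleton_zero, ModuleCat.ofHom_zero]
  naturality M N u := by
    ext x
    induction x using QuotientAddGroup.induction_on with | H g => ?_
    change evalToSpanSingleton a N (g ≫ u) = evalToSpanSingleton a M g ≫ u
    ext
    simp [evalToSpanSingleton_apply]

lemma ofBassTorsion_app_mk (a : bassTorsion R A) {M : ModuleCat.{u} R} (g : A ⟶ M) :
    (ofBassTorsion a).app M (QuotientAddGroup.mk g) =
      ModuleCat.ofHom (LinearMap.toSpanSingleton R M (g a)) :=
  rfl

lemma eps_ofBassTorsion (a : bassTorsion R A) : eps (ofBassTorsion a) = a :=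
  LinearMap.toSpanSingleton_apply_one R A _

lemma eps_add (α β : stableHomFunctor A ⟶ forgetfulFunctor R) :
    eps (α + β) = eps α + eps β := by
  rw [eps, NatTrans.app_add]
  rfl

lemma eps_stableHomPrecomp_comp {B : ModuleCat.{u} R} (f : A ⟶ B)
    (α : stableHomFunctor A ⟶ forgetfulFunctor R) :
    eps (stableHomPrecomp f ≫ α) = f (eps α) := by
  change toHom (α.app B (QuotientAddGroup.mk (f ≫ 𝟙 B))) 1 = _
  rw [Category.comp_id, app_mk]
  exact LinearMap.toSpanSingleton_apply_one R B _

variable (A) in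
def natTransEquivBassTorsion :
    (stableHomFunctor A ⟶ forgetfulFunctor R) ≃+ bassTorsion R A where
  toFun α := ⟨eps α, eps_mem α⟩
  invFun := ofBassTorsion
  left_inv α := by
    ext M x
    induction x using QuotientAddGroup.induction_on with | H g => ?_
    rw [ofBassTorsion_app_mk, app_mk]
  right_inv a := Subtype.ext (eps_ofBassTorsion a)
  map_add' α β := Subtype.ext (eps_add α β)

end stableHomFunctor

/-- the map `ε` sending a natural transformation
`α : (A,-)-underline ⟶ Hom(R,-)` to `f_α(1)`, where `f_α` corresponds to `α ∘ π`
under the Yoneda lemma (i.e. `f_α = (α ∘ π)_A(id_A)`), is a well-defined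
isomorphism of abelian groups onto the Bass torsion `t(A)`, naturally in `A`. -/
theorem statement0 (R : Type u) [Ring R] :
    ∃ e : (A : ModuleCat.{u} R) →
        ((stableHomFunctor A ⟶ forgetfulFunctor R) ≃+ bassTorsion R A),
      (∀ (A : ModuleCat.{u} R) (α : stableHomFunctor A ⟶ forgetfulFunctor R),
          ((e A α : bassTorsion R A) : A) =
            toHom (α.app A ((QuotientAddGroup.mk (𝟙 A)) : (A ⟶ A) ⧸ projSub A A))
              (1 : R)) ∧
      (∀ (A B : ModuleCat.{u} R) (f : A ⟶ B)
          (α : stableHomFunctor A ⟶ forgetfulFunctor R),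
          ((e B (stableHomPrecomp f ≫ α) : bassTorsion R B) : B) =
            f ((e A α : bassTorsion R A) : A)) :=
  ⟨stableHomFunctor.natTransEquivBassTorsion, fun _ _ => rfl,
    fun _ _ f α => stableHomFunctor.eps_stableHomPrecomp_comp f α⟩
end

section
/- Let R be a ring and A a left R-module. If β : Hom(A,-) ⟶ Hom(R,-) is a natural transformation of additive functors such that β_M(g) = 0 for every module M and every homomorphism g : A → M that factors through a projective module, then the element a := (β_A(id_A))(1) ∈ A lies in the Bass torsion t(A). -/
/-!
A linear form `h : A → R` factors through the projective module `R`, so `β` kills it.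
By the Yoneda lemma `β_R(h) = h ∘ β_A(id_A)`, and evaluating at `1` gives `h a = 0`.
-/

open CategoryTheory Opposite

universe u

variable {R : Type u} [Ring R]

theorem CategoryTheory.NatTrans.app_preadditiveCoyoneda_eq_map {C : Type*} [Category C]
    [Preadditive C] {A M : C} {F : C ⥤ AddCommGrpCat} (β : preadditiveCoyoneda.obj (op A) ⟶ F)
    (g : A ⟶ M) : β.app M g = F.map g (β.app A (𝟙 A)) :=
  calc β.app M g = β.app M (𝟙 A ≫ g) := by rw [Category.id_comp]
    _ = F.map g (β.app A (𝟙 A)) := ConcreteCategory.congr_hom (β.naturality g) (𝟙 A)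

theorem toHom_comp_eq_toHom_app {A M : ModuleCat.{u} R}
    (β : preadditiveCoyoneda.obj (op A) ⟶ forgetfulFunctor R) (g : A ⟶ M) :
    toHom (β.app A (𝟙 A)) ≫ g = toHom (β.app M g) := by
  rw [β.app_preadditiveCoyoneda_eq_map g]
  rfl

theorem factorsThroughProjective_of_projective {A M : ModuleCat.{u} R} [Module.Projective R M]
    (g : A ⟶ M) : FactorsThroughProjective g :=
  ⟨M, g, 𝟙 M, inferInstance, Category.comp_id g⟩

/-- if `β : Hom(A,-) ⟶ Hom(R,-)` is a natural transformation vanishing on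
every homomorphism that factors through a projective module, then `(β_A(id_A))(1)`
lies in the Bass torsion `t(A)`. -/
theorem statement1 (R : Type u) [Ring R] (A : ModuleCat.{u} R)
    (β : preadditiveCoyoneda.obj (op A) ⟶ forgetfulFunctor R)
    (hβ : ∀ (M : ModuleCat.{u} R) (g : A ⟶ M),
      FactorsThroughProjective g → β.app M g = 0) :
    toHom (β.app A (𝟙 A)) (1 : R) ∈ bassTorsion R A := by
  intro h
  let g : A ⟶ ModuleCat.of R R := ModuleCat.ofHom h
  have hg : toHom (β.app A (𝟙 A)) ≫ g = 0 := by
    rw [toHom_comp_eq_toHom_app, hβ _ g (factorsThroughProjective_of_projective g)]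
    rfl
  exact congrArg (fun f : ModuleCat.of R R ⟶ ModuleCat.of R R => f.hom 1) hg
end

section
/- Let R be a ring and A a left R-module. Every natural transformation from the functor Hom(A,-) modulo injectives, M ↦ Hom_R(A,M)/I(A,M), to the forgetful functor Hom(R,-) is zero. Equivalently, any natural transformation β : Hom(A,-) ⟶ Hom(R,-) of additive functors that vanishes on all homomorphisms factoring through an injective module is the zero transformation. -/
open CategoryTheory Opposite

universe u

variable {R : Type u} [Ring R]

theorem injective_punit : Module.Injective R PUnit.{u + 1} := by
  constructor
  intro X Y _ _ _ _ f hf g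
  exact ⟨0, fun x => Subsingleton.elim _ _⟩

theorem injective_prod {P Q : Type u} [AddCommGroup P] [AddCommGroup Q] [Module R P]
    [Module R Q] (hP : Module.Injective R P) (hQ : Module.Injective R Q) :
    Module.Injective R (P × Q) := by
  constructor
  intro X Y _ _ _ _ f hf g
  obtain ⟨h₁, hh₁⟩ := hP.out f hf (LinearMap.fst R P Q ∘ₗ g)
  obtain ⟨h₂, hh₂⟩ := hQ.out f hf (LinearMap.snd R P Q ∘ₗ g)
  refine ⟨LinearMap.prod h₁ h₂, fun x => Prod.ext ?_ ?_⟩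
  · simpa using hh₁ x
  · simpa using hh₂ x

/-- A homomorphism factors through an injective module. -/
def FactorsThroughInjective {A M : ModuleCat.{u} R} (g : A ⟶ M) : Prop :=
  ∃ (E : ModuleCat.{u} R) (p : A ⟶ E) (q : E ⟶ M), Module.Injective R E ∧ p ≫ q = g

/-- The subgroup of maps factoring through an injective. -/
def injSub (A M : ModuleCat.{u} R) : AddSubgroup (A ⟶ M) where
  carrier := {g | FactorsThroughInjective g}
  zero_mem' := ⟨ModuleCat.of R PUnit, 0, 0, injective_punit, by simp⟩
  add_mem' := by
    rintro g₁ g₂ ⟨E₁, p₁, q₁, hE₁, h₁⟩ ⟨E₂, p₂, q₂, hE₂, h₂⟩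
    refine ⟨ModuleCat.of R (E₁ × E₂), ModuleCat.ofHom (LinearMap.prod p₁.hom p₂.hom),
      ModuleCat.ofHom (q₁.hom ∘ₗ LinearMap.fst R E₁ E₂ + q₂.hom ∘ₗ LinearMap.snd R E₁ E₂),
      injective_prod hE₁ hE₂, ?_⟩
    subst h₁ h₂
    ext a
    rfl
  neg_mem' := by
    rintro g ⟨E, p, q, hE, h⟩
    exact ⟨E, p, -q, hE, by rw [← h]; simp⟩

/-- The Hom functor `Hom(A,-)` modulo injectives. -/
def injStableHomFunctor (A : ModuleCat.{u} R) : ModuleCat.{u} R ⥤ AddCommGrpCat.{u} where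
  obj M := AddCommGrpCat.of ((A ⟶ M) ⧸ injSub A M)
  map {M N} f := AddCommGrpCat.ofHom (QuotientAddGroup.map _ _ (postcompHom f)
    (by rintro g ⟨E, p, q, hE, h⟩; exact ⟨E, p, q ≫ f, hE, by rw [← h]; simp [postcompHom]⟩))
  map_id M := by
    ext x
    simp [postcompHom]
  map_comp {M N K} f g := by
    ext x
    simp [postcompHom]

/-!
By Yoneda, a natural transformation `β : Hom(A,-) ⟶ Hom(R,-)` is `g ↦ x ≫ g` with
`x = β_A(𝟙 A) : R ⟶ A`. If `β` vanishes on maps through injectives, it kills the embedding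
`ι : A ⟶ I` of `A` into an injective, so `x ≫ ι = 0` and `x = 0` because `ι` is mono.
A transformation out of `Hom(A,-)` modulo injectives composed with the epimorphism
`Hom(A,-) ⟶ Hom(A,-)/I(A,-)` gives such a `β`, hence is zero too.
-/

section Preadditive

variable {C : Type*} [Category C] [Preadditive C]

theorem preadditiveCoyoneda_natTrans_app {A M : C} {F : C ⥤ AddCommGrpCat}
    (β : preadditiveCoyoneda.obj (op A) ⟶ F) (g : A ⟶ M) :
    β.app M g = F.map g (β.app A (𝟙 A)) :=
  (congrArg (β.app M) (Category.id_comp g)).symm.trans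
    (ConcreteCategory.congr_hom (β.naturality g) (𝟙 A))

theorem preadditiveCoyoneda_natTrans_eq_zero_of_app_mono {A B I : C}
    (β : preadditiveCoyoneda.obj (op A) ⟶ preadditiveCoyoneda.obj (op B))
    (ι : A ⟶ I) [Mono ι] (hι : β.app I ι = 0) : β = 0 := by
  have hid : (β.app A (𝟙 A) : B ⟶ A) = 0 := (cancel_mono ι).mp <|
    (preadditiveCoyoneda_natTrans_app β ι).symm.trans (hι.trans Limits.zero_comp.symm)
  ext M g
  exact (preadditiveCoyoneda_natTrans_app β g).trans
    ((congrArg (· ≫ g) hid).trans Limits.zero_comp)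

end Preadditive

theorem factorsThroughInjective_ι (A : ModuleCat.{u} R) :
    FactorsThroughInjective (Injective.ι A) :=
  ⟨Injective.under A, Injective.ι A, 𝟙 _,
    Module.injective_module_of_injective_object R _ (inj := Injective.injective_under A),
    Category.comp_id _⟩

theorem natTrans_eq_zero_of_app_factorsThroughInjective {A B : ModuleCat.{u} R}
    (β : preadditiveCoyoneda.obj (op A) ⟶ preadditiveCoyoneda.obj (op B))
    (hβ : ∀ (M : ModuleCat.{u} R) (g : A ⟶ M), FactorsThroughInjective g → β.app M g = 0) :
    β = 0 :=
  preadditiveCoyoneda_natTrans_eq_zero_of_app_mono β (Injective.ι A)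
    (hβ _ _ (factorsThroughInjective_ι A))

def injStableHomProjection (A : ModuleCat.{u} R) :
    preadditiveCoyoneda.obj (op A) ⟶ injStableHomFunctor A where
  app M := AddCommGrpCat.ofHom (QuotientAddGroup.mk' (injSub A M))
  naturality _ _ _ := rfl

instance (A M : ModuleCat.{u} R) : Epi ((injStableHomProjection A).app M) :=
  (AddCommGrpCat.epi_iff_surjective _).mpr (QuotientAddGroup.mk'_surjective (injSub A M))

instance (A : ModuleCat.{u} R) : Epi (injStableHomProjection A) :=
  NatTrans.epi_of_epi_app _

theorem injStableHomProjection_app_eq_zero {A M : ModuleCat.{u} R} {g : A ⟶ M}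
    (hg : FactorsThroughInjective g) : (injStableHomProjection A).app M g = 0 :=
  (QuotientAddGroup.eq_zero_iff (N := injSub A M) g).mpr hg

theorem injStableHomFunctor_natTrans_eq_zero {A B : ModuleCat.{u} R}
    (α : injStableHomFunctor A ⟶ preadditiveCoyoneda.obj (op B)) : α = 0 := by
  have hπα : injStableHomProjection A ≫ α = 0 :=
    natTrans_eq_zero_of_app_factorsThroughInjective _ fun M g hg => by
      change α.app M ((injStableHomProjection A).app M g) = 0
      rw [injStableHomProjection_app_eq_zero hg, map_zero]
  rwa [← cancel_epi (injStableHomProjection A), Limits.comp_zero]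

/-- every natural transformation from the covariant Hom functor modulo
injectives `M ↦ Hom(A,M)/I(A,M)` to the forgetful functor `Hom(R,-)` is zero.
Equivalently, a natural transformation `β : Hom(A,-) ⟶ Hom(R,-)` vanishing on all
homomorphisms that factor through an injective module is the zero transformation. -/
theorem statement3 (R : Type u) [Ring R] (A : ModuleCat.{u} R) :
    (∀ α : injStableHomFunctor A ⟶ forgetfulFunctor R, α = 0) ∧
    (∀ β : preadditiveCoyoneda.obj (op A) ⟶ forgetfulFunctor R,
      (∀ (M : ModuleCat.{u} R) (g : A ⟶ M),
        FactorsThroughInjective g → β.app M g = 0) → β = 0) :=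
  ⟨injStableHomFunctor_natTrans_eq_zero, natTrans_eq_zero_of_app_factorsThroughInjective⟩
end

section
/- Let R be a ring, f : Y → X a homomorphism of left R-modules, and F an additive covariant functor from left R-modules to abelian groups equipped with a componentwise exact presentation Hom(X,-) → Hom(Y,-) → F → 0, where the first map is composition with f. Then Nat(F, Hom(R,-)) is isomorphic, as an abelian group, to ker f. (For finitely presented functors, the new defect is isomorphic to Auslander's defect.) -/
/-!
Put `e = π_Y(𝟙_Y) ∈ F(Y)`, so that `π_M(g) = F(g)(e)` by Yoneda. Since every `π_M` is onto, a
natural transformation `α : F ⟶ G` is determined by `α_Y(e)`, and `G(f)(α_Y e) = α_X(π_X f) = 0`.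
Conversely, if `G` is additive and `a ∈ G(Y)` satisfies `G(f)(a) = 0`, the Yoneda transformation
`g ↦ G(g)(a)` kills `ker π_M = {f ≫ h}` and therefore descends along `π` to `F`. Thus
`Nat(F, G) ≅ ker G(f)`; for `G = Hom(R,-)`, evaluation at `1` identifies `ker G(f)` with `ker f`.
-/

open CategoryTheory Opposite

universe u

namespace CategoryTheory

universe v w

variable {C : Type w} [Category.{v} C]

namespace NatTrans

variable {P F G : C ⥤ AddCommGrpCat.{v}} (π : P ⟶ F)

noncomputable def descOfSurjective (hπ : ∀ M, Function.Surjective (π.app M)) (φ : P ⟶ G)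
    (hφ : ∀ M, (π.app M).hom.ker ≤ (φ.app M).hom.ker) : F ⟶ G where
  app M := AddCommGrpCat.ofHom <| (π.app M).hom.liftOfSurjective (hπ M) ⟨(φ.app M).hom, hφ M⟩
  naturality M N h := by
    ext x
    obtain ⟨p, rfl⟩ := hπ M x
    have hπh := ConcreteCategory.congr_hom (π.naturality h) p
    have hφh := ConcreteCategory.congr_hom (φ.naturality h) p
    simp only [ConcreteCategory.comp_apply] at hπh hφh ⊢
    rw [← hπh]
    simp only [AddCommGrpCat.hom_ofHom, AddMonoidHom.liftOfRightInverse_comp_apply]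
    exact hφh

lemma descOfSurjective_app_apply (hπ : ∀ M, Function.Surjective (π.app M)) (φ : P ⟶ G)
    (hφ : ∀ M, (π.app M).hom.ker ≤ (φ.app M).hom.ker) {M : C} (p : P.obj M) :
    (descOfSurjective π hπ φ hφ).app M (π.app M p) = φ.app M p := by
  simp [descOfSurjective]

lemma comp_descOfSurjective (hπ : ∀ M, Function.Surjective (π.app M)) (φ : P ⟶ G)
    (hφ : ∀ M, (π.app M).hom.ker ≤ (φ.app M).hom.ker) :
    π ≫ descOfSurjective π hπ φ hφ = φ := by
  ext M p
  exact descOfSurjective_app_apply π hπ φ hφ p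

lemma epi_of_surjective_app (hπ : ∀ M, Function.Surjective (π.app M)) : Epi π :=
  have _ : ∀ M, Epi (π.app M) := fun M => (AddCommGrpCat.epi_iff_surjective _).2 (hπ M)
  NatTrans.epi_of_epi_app π

end NatTrans

variable [Preadditive C]

section Yoneda

variable {Y : C}

lemma NatTrans.app_preadditiveCoyoneda_eq_map_s6 {F : C ⥤ AddCommGrpCat.{v}}
    (β : preadditiveCoyoneda.obj (op Y) ⟶ F) {M : C} (g : Y ⟶ M) :
    β.app M g = F.map g (β.app Y (𝟙 Y)) := by
  conv_lhs => rw [← Category.id_comp g]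
  exact ConcreteCategory.congr_hom (β.naturality g) (𝟙 Y)

variable (G : C ⥤ AddCommGrpCat.{v}) [G.Additive]

def preadditiveCoyonedaHomOfElem (a : G.obj Y) : preadditiveCoyoneda.obj (op Y) ⟶ G where
  app M := AddCommGrpCat.ofHom
    { toFun g := G.map g a
      map_zero' := ConcreteCategory.congr_hom (G.map_zero Y M) a
      map_add' g g' := ConcreteCategory.congr_hom (G.map_add (f := (g : Y ⟶ M)) (g := g')) a }
  naturality M N h := by
    ext g
    exact ConcreteCategory.congr_hom (G.map_comp (f := (g : Y ⟶ M)) (g := h)) a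

lemma eq_preadditiveCoyonedaHomOfElem (β : preadditiveCoyoneda.obj (op Y) ⟶ G) :
    β = preadditiveCoyonedaHomOfElem G (β.app Y (𝟙 Y)) := by
  ext M g
  exact β.app_preadditiveCoyoneda_eq_map_s6 g

end Yoneda

section Presentation

variable {X Y : C} (f : Y ⟶ X) {F G : C ⥤ AddCommGrpCat.{v}}
  (π : preadditiveCoyoneda.obj (op Y) ⟶ F)

lemma map_app_app_id_eq_zero (hf : π.app X f = 0) (α : F ⟶ G) :
    G.map f (α.app Y (π.app Y (𝟙 Y))) = 0 := by
  have hα := ConcreteCategory.congr_hom (α.naturality f) (π.app Y (𝟙 Y))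
  simp only [ConcreteCategory.comp_apply] at hα
  rw [← hα, ← π.app_preadditiveCoyoneda_eq_map_s6 f, hf, map_zero]

lemma ker_app_le_ker_preadditiveCoyonedaHomOfElem [G.Additive]
    (hexact : ∀ (M : C) (g : Y ⟶ M), π.app M g = 0 → ∃ h : X ⟶ M, f ≫ h = g)
    {a : G.obj Y} (ha : G.map f a = 0) (M : C) :
    (π.app M).hom.ker ≤ ((preadditiveCoyonedaHomOfElem G a).app M).hom.ker := by
  intro g hg
  obtain ⟨h, rfl⟩ := hexact M g hg
  change G.map (f ≫ h) a = 0
  rw [Functor.map_comp, ConcreteCategory.comp_apply, ha, map_zero]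

noncomputable def homAddEquivKerMapOfPresentation [G.Additive]
    (hsurj : ∀ M, Function.Surjective (π.app M))
    (hexact : ∀ (M : C) (g : Y ⟶ M), π.app M g = 0 ↔ ∃ h : X ⟶ M, f ≫ h = g) :
    (F ⟶ G) ≃+ (G.map f).hom.ker where
  toFun α := ⟨α.app Y (π.app Y (𝟙 Y)),
    map_app_app_id_eq_zero f π ((hexact X f).2 ⟨𝟙 X, Category.comp_id f⟩) α⟩
  invFun a := NatTrans.descOfSurjective π hsurj (preadditiveCoyonedaHomOfElem G a.1)
    (ker_app_le_ker_preadditiveCoyonedaHomOfElem f π (fun M g => (hexact M g).1) a.2)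
  left_inv α := by
    have := NatTrans.epi_of_surjective_app π hsurj
    rw [← cancel_epi π, NatTrans.comp_descOfSurjective]
    exact (eq_preadditiveCoyonedaHomOfElem G (π ≫ α)).symm
  right_inv a := by
    ext
    exact (NatTrans.descOfSurjective_app_apply π hsurj _ _ (𝟙 Y)).trans
      (ConcreteCategory.congr_hom (G.map_id Y) a.1)
  map_add' _ _ := rfl

end Presentation

end CategoryTheory

instance {R : Type u} [Ring R] : (forgetfulFunctor R).Additive :=
  inferInstanceAs (preadditiveCoyoneda.obj (op (ModuleCat.of R R))).Additive

noncomputable def ModuleCat.homOfSelfAddEquiv {R : Type u} [Ring R] (M : ModuleCat.{u} R) :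
    (ModuleCat.of R R ⟶ M) ≃+ M :=
  ModuleCat.homAddEquiv.trans (LinearMap.ringLmapEquivSelf R ℕ M).toAddEquiv

noncomputable def kerForgetfulFunctorMapAddEquiv {R : Type u} [Ring R] {X Y : ModuleCat.{u} R}
    (f : Y ⟶ X) :
    ((forgetfulFunctor R).map f).hom.ker ≃+ LinearMap.ker f.hom where
  __ := (ModuleCat.homOfSelfAddEquiv Y).toEquiv.subtypeEquiv fun g => by
    change g ≫ f = 0 ↔ f.hom (g.hom 1) = 0
    rw [← (ModuleCat.homOfSelfAddEquiv X).map_eq_zero_iff]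
    rfl
  map_add' _ _ := rfl

theorem statement6_general (R : Type u) [Ring R] (X Y : ModuleCat.{u} R) (f : Y ⟶ X)
    (F : ModuleCat.{u} R ⥤ AddCommGrpCat.{u})
    (π : preadditiveCoyoneda.obj (op Y) ⟶ F)
    (hsurj : ∀ M : ModuleCat.{u} R, Function.Surjective (π.app M))
    (hexact : ∀ (M : ModuleCat.{u} R) (g : Y ⟶ M),
      π.app M g = 0 ↔ ∃ h : X ⟶ M, f ≫ h = g) :
    Nonempty ((F ⟶ forgetfulFunctor R) ≃+ LinearMap.ker f.hom) :=
  ⟨(homAddEquivKerMapOfPresentation f π hsurj hexact).trans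
    (kerForgetfulFunctorMapAddEquiv f)⟩

/-- if the additive functor `F` has a componentwise exact presentation
`Hom(X,-) → Hom(Y,-) → F → 0` with first map given by composition with `f : Y → X`,
then the defect `Nat(F, Hom(R,-))` is isomorphic, as an abelian group, to `ker f`. -/
theorem statement6 (R : Type u) [Ring R] (X Y : ModuleCat.{u} R) (f : Y ⟶ X)
    (F : ModuleCat.{u} R ⥤ AddCommGrpCat.{u}) [F.Additive]
    (π : preadditiveCoyoneda.obj (op Y) ⟶ F)
    (hsurj : ∀ M : ModuleCat.{u} R, Function.Surjective (π.app M))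
    (hexact : ∀ (M : ModuleCat.{u} R) (g : Y ⟶ M),
      π.app M g = 0 ↔ ∃ h : X ⟶ M, f ≫ h = g) :
    Nonempty ((F ⟶ forgetfulFunctor R) ≃+ LinearMap.ker f.hom) :=
  statement6_general R X Y f F π hsurj hexact
end

section
/- Let R be a ring, f : Y → X a homomorphism of left R-modules, and F an additive covariant functor with componentwise exact presentation Hom(X,-) → Hom(Y,-) → F → 0, the first map being composition with f. Then ker f = 0 (the defect of F is zero) if and only if F(I) = 0 for every injective left R-module I (the functor vanishes on injectives). -/
open CategoryTheory Opposite

universe u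

/-! `ker f = 0` says that `f` is a monomorphism. Every map from `Y` into an injective module extends
along a monomorphism; conversely, if some monomorphism of `Y` into an injective module extends along
`f`, then `f` is itself a monomorphism. By the presentation, `F(I) = 0` says precisely that every
map `Y ⟶ I` extends along `f`. -/

namespace CategoryTheory

theorem mono_iff_forall_injective_factors {C : Type*} [Category C] [EnoughInjectives C]
    {X Y : C} (f : Y ⟶ X) :
    Mono f ↔ ∀ (I : C), Injective I → ∀ g : Y ⟶ I, ∃ h : X ⟶ I, f ≫ h = g := by
  refine ⟨fun _ I _ g => ⟨Injective.factorThru g f, Injective.comp_factorThru g f⟩, fun hf => ?_⟩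
  obtain ⟨h, hh⟩ := hf _ inferInstance (Injective.ι Y)
  exact mono_of_mono_fac hh

end CategoryTheory

theorem ModuleCat.module_injective_iff_injective {R : Type u} [Ring R] (I : ModuleCat.{u} R) :
    Module.Injective R I ↔ Injective I :=
  Module.injective_iff_injective_object R I

theorem statement7_general (R : Type u) [Ring R] (X Y : ModuleCat.{u} R) (f : Y ⟶ X)
    (F : ModuleCat.{u} R ⥤ AddCommGrpCat.{u})
    (π : preadditiveCoyoneda.obj (op Y) ⟶ F)
    (hsurj : ∀ M : ModuleCat.{u} R, Function.Surjective (π.app M))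
    (hexact : ∀ (M : ModuleCat.{u} R) (g : Y ⟶ M),
      π.app M g = 0 ↔ ∃ h : X ⟶ M, f ≫ h = g) :
    LinearMap.ker f.hom = ⊥ ↔
      ∀ I : ModuleCat.{u} R, Module.Injective R I → ∀ x : F.obj I, x = 0 := by
  have vanishes_iff (I : ModuleCat.{u} R) :
      (∀ x : F.obj I, x = 0) ↔ ∀ g : Y ⟶ I, ∃ h : X ⟶ I, f ≫ h = g := by
    rw [(hsurj I).forall]
    exact forall_congr' (hexact I)
  simp only [← ModuleCat.mono_iff_ker_eq_bot, mono_iff_forall_injective_factors,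
    ModuleCat.module_injective_iff_injective, vanishes_iff]

/-- if the additive functor `F` has a componentwise exact presentation
`Hom(X,-) → Hom(Y,-) → F → 0` with first map given by composition with `f : Y → X`,
then the defect `ker f` is zero if and only if `F` vanishes on all injective modules. -/
theorem statement7 (R : Type u) [Ring R] (X Y : ModuleCat.{u} R) (f : Y ⟶ X)
    (F : ModuleCat.{u} R ⥤ AddCommGrpCat.{u}) [F.Additive]
    (π : preadditiveCoyoneda.obj (op Y) ⟶ F)
    (hsurj : ∀ M : ModuleCat.{u} R, Function.Surjective (π.app M))
    (hexact : ∀ (M : ModuleCat.{u} R) (g : Y ⟶ M),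
      π.app M g = 0 ↔ ∃ h : X ⟶ M, f ≫ h = g) :
    LinearMap.ker f.hom = ⊥ ↔
      ∀ I : ModuleCat.{u} R, Module.Injective R I → ∀ x : F.obj I, x = 0 :=
  statement7_general R X Y f F π hsurj hexact
end

section
/- Let R be a ring and let η : F ⟶ G be a natural transformation between finitely presented additive covariant functors from left R-modules to abelian groups. Then the componentwise cokernel functor C, defined by C(M) = coker(η_M : F(M) → G(M)) with the induced action on morphisms, is again a finitely presented functor: there exist left R-modules X, Y, a homomorphism f : Y → X, and a componentwise exact sequence Hom(X,-) → Hom(Y,-) → C → 0 with first map given by composition with f. -/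
/-!
The cokernel `C` of `η : F ⟶ G` is a quotient of `G`, so a presentation
`Hom(Y_G,-) → G → 0` of `G` also maps onto `C`. A morphism `g : Y_G ⟶ M` dies in `C(M)` iff its
image in `G(M)` lies in `η_M(F(M))`. Since `F` is a quotient of `Hom(Y_F,-)`, this image is generated
by the single element `η(π_F(𝟙))`; lifting it to `u : Y_G ⟶ Y_F` gives `η_M(π_F w) = π_G(u ≫ w)`.
Hence `g` dies in `C(M)` iff `g = f_G ≫ k + u ≫ w` for some `k, w`, i.e. iff `g` factors through
`biprod.lift f_G u : Y_G ⟶ X_G ⊞ Y_F`.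
-/

open CategoryTheory Opposite

universe u

variable {R : Type u} [Ring R]

/-- An additive functor is finitely presented if it has a componentwise exact
presentation `Hom(X,-) → Hom(Y,-) → F → 0`, where the first map is composition with
some homomorphism `f : Y → X`. -/
def IsFinitelyPresented (R : Type u) [Ring R]
    (F : ModuleCat.{u} R ⥤ AddCommGrpCat.{u}) : Prop :=
  ∃ (X Y : ModuleCat.{u} R) (f : Y ⟶ X) (π : preadditiveCoyoneda.obj (op Y) ⟶ F),
    (∀ M : ModuleCat.{u} R, Function.Surjective (π.app M)) ∧
    (∀ (M : ModuleCat.{u} R) (g : Y ⟶ M), π.app M g = 0 ↔ ∃ h : X ⟶ M, f ≫ h = g)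

/-- The componentwise cokernel of a natural transformation, with the induced action on
morphisms. -/
def cokerFunctor {F G : ModuleCat.{u} R ⥤ AddCommGrpCat.{u}} (η : F ⟶ G) :
    ModuleCat.{u} R ⥤ AddCommGrpCat.{u} where
  obj M := AddCommGrpCat.of (G.obj M ⧸ (η.app M).hom.range)
  map {M N} u := AddCommGrpCat.ofHom (QuotientAddGroup.map _ _ (G.map u).hom (by
    rintro x ⟨y, rfl⟩
    refine ⟨F.map u y, ?_⟩
    have h := ConcreteCategory.congr_hom (η.naturality u) y
    simpa using h))
  map_id M := by
    ext x
    simp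
  map_comp {M N K} u v := by
    ext x
    simp

open Limits

namespace CategoryTheory

variable {C : Type*} [Category C] [Preadditive C] {G : C ⥤ AddCommGrpCat}

lemma preadditiveCoyoneda_app_comp {Y Z M : C} (α : preadditiveCoyoneda.obj (op Y) ⟶ G)
    (u : Y ⟶ Z) (w : Z ⟶ M) : α.app M (u ≫ w) = G.map w (α.app Z u) :=
  ConcreteCategory.congr_hom (α.naturality w) u

lemma preadditiveCoyoneda_app_sub {Y M : C} (α : preadditiveCoyoneda.obj (op Y) ⟶ G)
    (g h : Y ⟶ M) : α.app M (g - h) = α.app M g - α.app M h :=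
  map_sub (α.app M).hom g h

lemma preadditiveCoyoneda_app_comp_eq_app {Y Z M : C} (α : preadditiveCoyoneda.obj (op Y) ⟶ G)
    (β : preadditiveCoyoneda.obj (op Z) ⟶ G) {u : Y ⟶ Z} (hu : α.app Z u = β.app Z (𝟙 Z))
    (w : Z ⟶ M) : α.app M (u ≫ w) = β.app M w := by
  rw [preadditiveCoyoneda_app_comp, hu, ← preadditiveCoyoneda_app_comp, Category.id_comp]

end CategoryTheory

lemma isFinitelyPresented_of_relations_pair {H : ModuleCat.{u} R ⥤ AddCommGrpCat.{u}}
    {X Y Z : ModuleCat.{u} R} (f : Y ⟶ X) (u : Y ⟶ Z) (π : preadditiveCoyoneda.obj (op Y) ⟶ H)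
    (hπ : ∀ M, Function.Surjective (π.app M))
    (hker : ∀ M (g : Y ⟶ M), π.app M g = 0 ↔ ∃ (a : X ⟶ M) (b : Z ⟶ M), f ≫ a + u ≫ b = g) :
    IsFinitelyPresented R H := by
  refine ⟨X ⊞ Z, Y, biprod.lift f u, π, hπ, fun M g => (hker M g).trans ⟨?_, ?_⟩⟩
  · rintro ⟨a, b, rfl⟩
    exact ⟨biprod.desc a b, biprod.lift_desc⟩
  · rintro ⟨h, rfl⟩
    refine ⟨biprod.inl ≫ h, biprod.inr ≫ h, ?_⟩
    have hdesc : biprod.desc (biprod.inl ≫ h) (biprod.inr ≫ h) = h :=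
      biprod.hom_ext' _ _ (by simp) (by simp)
    rw [← biprod.lift_desc, hdesc]

section Cokernel

def cokerπ {F G : ModuleCat.{u} R ⥤ AddCommGrpCat.{u}} (η : F ⟶ G) : G ⟶ cokerFunctor η where
  app M := AddCommGrpCat.ofHom (QuotientAddGroup.mk' (η.app M).hom.range)
  naturality _ _ _ := rfl

variable {F G : ModuleCat.{u} R ⥤ AddCommGrpCat.{u}} (η : F ⟶ G)

lemma cokerπ_app_surjective (M : ModuleCat.{u} R) : Function.Surjective ((cokerπ η).app M) :=
  QuotientAddGroup.mk'_surjective _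

lemma cokerπ_app_eq_zero_iff {M : ModuleCat.{u} R} (x : G.obj M) :
    (cokerπ η).app M x = 0 ↔ ∃ y, η.app M y = x :=
  QuotientAddGroup.eq_zero_iff x

end Cokernel

theorem statement14_general (R : Type u) [Ring R]
    (F G : ModuleCat.{u} R ⥤ AddCommGrpCat.{u})
    (hF : IsFinitelyPresented R F) (hG : IsFinitelyPresented R G) (η : F ⟶ G) :
    IsFinitelyPresented R (cokerFunctor η) := by
  obtain ⟨-, YF, -, πF, hπF, -⟩ := hF
  obtain ⟨XG, YG, fG, πG, hπG, hkerG⟩ := hG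
  obtain ⟨u, hu⟩ := hπG YF (η.app YF (πF.app YF (𝟙 YF)))
  have hηπF : ∀ M (w : YF ⟶ M), η.app M (πF.app M w) = πG.app M (u ≫ w) := fun M w =>
    (preadditiveCoyoneda_app_comp_eq_app πG (πF ≫ η) hu w).symm
  refine isFinitelyPresented_of_relations_pair fG u (πG ≫ cokerπ η)
    (fun M => (cokerπ_app_surjective η M).comp (hπG M)) fun M g => ?_
  calc (cokerπ η).app M (πG.app M g) = 0 ↔ ∃ w : YF ⟶ M, πG.app M (g - u ≫ w) = 0 := by
        rw [cokerπ_app_eq_zero_iff, (hπF M).exists]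
        exact exists_congr fun w => by
          rw [preadditiveCoyoneda_app_sub, sub_eq_zero, ← hηπF M w, eq_comm]
    _ ↔ ∃ (k : XG ⟶ M) (w : YF ⟶ M), fG ≫ k + u ≫ w = g := by
        simp only [hkerG, eq_sub_iff_add_eq]
        exact exists_comm

/-- the componentwise cokernel of a natural transformation between
finitely presented additive functors is finitely presented. -/
theorem statement14 (R : Type u) [Ring R]
    (F G : ModuleCat.{u} R ⥤ AddCommGrpCat.{u}) [F.Additive] [G.Additive]
    (hF : IsFinitelyPresented R F) (hG : IsFinitelyPresented R G) (η : F ⟶ G) :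
    IsFinitelyPresented R (cokerFunctor η) :=
  statement14_general R F G hF hG η
end
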